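/- Let n ≥ 1 and let c ∈ ℂ with c ≠ 0. Consider the real-valued function g : ℂⁿ → ℝ defined by g(z) = |c + z₁² + ⋯ + zₙ²|. Then 0 is a critical point of g (the real Fréchet derivative of g at 0 vanishes), the second real Fréchet derivative of g at 0, viewed as a symmetric bilinear form B on ℝ^{2n}, is nondegenerate, and there exist real subspaces P and N of ℝ^{2n} with dim P = dim N = n, ℝ^{2n} = P ⊕ N, such that B is positive definite on P and negative definite on N; i.e., 0 is a nondegenerate critical point of g of Morse index n. -/

import Mathlib

/-!
Write the function as `‖q‖` with `q z = c + ∑ zᵢ²`. At `0` the differential of `q` vanishes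
and `q 0 = c ≠ 0`, so `0` is critical and the Hessian of `‖q‖` there is
`‖c‖⁻¹ ⟪c, d²q(0)(v, w)⟫ = 2 ‖c‖⁻¹ Re (c̄ ∑ vᵢ wᵢ)`. Pairing `v` with `w = c v̄` gives
`2 ‖c‖ ∑ |vᵢ|²`, hence nondegeneracy. If `b² = c`, then on the real `n`-dimensional subspace
`b ℝⁿ` the quadratic form is `2 ‖c‖ ∑ uᵢ² > 0`, and on `i b ℝⁿ` it is its negative. Definiteness
of opposite signs forces the two subspaces to meet only in `0`, and since their dimensions add
up to `2n` they are complementary.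
-/

open Finset Topology

open scoped RealInnerProductSpace

section NormCalculus

variable {E F : Type*} [NormedAddCommGroup E] [NormedSpace ℝ E]
  [NormedAddCommGroup F] [InnerProductSpace ℝ F]

theorem HasFDerivAt.norm {f : E → F} {f' : E →L[ℝ] F} {x : E} (hf : HasFDerivAt f f' x)
    (h0 : f x ≠ 0) :
    HasFDerivAt (fun y => ‖f y‖) (‖f x‖⁻¹ • (innerSL ℝ (f x)).comp f') x := by
  have h := hf.norm_sq.sqrt (by positivity)
  simp only [Real.sqrt_sq (norm_nonneg _)] at h
  convert h using 1
  ext v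
  simp only [smul_apply, ContinuousLinearMap.comp_apply, smul_eq_mul, two_smul, add_apply]
  field_simp
  ring

/-- Since `f' x = 0`, differentiating `y ↦ ‖f y‖⁻¹ • ⟪f y, f' y ·⟫` at `x` by the product rule
leaves only the term in which `f'` is differentiated. -/
theorem fderiv_fderiv_norm_of_fderiv_eq_zero {f : E → F} {f' : E → E →L[ℝ] F}
    {f'' : E →L[ℝ] E →L[ℝ] F} {x : E} (hf : ∀ᶠ y in 𝓝 x, HasFDerivAt f (f' y) y)
    (hf' : HasFDerivAt f' f'' x) (hx : f' x = 0) (h0 : f x ≠ 0) (v w : E) :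
    fderiv ℝ (fun y => fderiv ℝ (fun z => ‖f z‖) y) x v w = ‖f x‖⁻¹ * ⟪f x, f'' v w⟫ := by
  have hne : ∀ᶠ y in 𝓝 x, f y ≠ 0 := hf.self_of_nhds.continuousAt.eventually_ne h0
  have hloc : (fun y => fderiv ℝ (fun z => ‖f z‖) y) =ᶠ[𝓝 x]
      fun y => ‖f y‖⁻¹ • (innerSL ℝ (f y)).comp (f' y) := by
    filter_upwards [hf, hne] with y hy hy0 using (hy.norm hy0).fderiv
  have hderiv : HasFDerivAt (fun y => ‖f y‖⁻¹ • (innerSL ℝ (f y)).comp (f' y)) _ x :=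
    ((hf.self_of_nhds.norm h0).differentiableAt.inv (norm_ne_zero_iff.mpr h0)).hasFDerivAt.fun_smul
      (((innerSL ℝ).hasFDerivAt.comp x hf.self_of_nhds).clm_comp hf')
  rw [hloc.fderiv_eq, hderiv.fderiv]
  simp only [Pi.inv_apply, Function.comp_apply, hx, map_zero, ContinuousLinearMap.comp_zero,
    add_zero, ContinuousLinearMap.smulRight_zero, smul_apply, ContinuousLinearMap.comp_apply,
    ContinuousLinearMap.compL_apply, smul_eq_mul]
  rfl

end NormCalculus

theorem Submodule.isCompl_of_pos_of_neg {K V : Type*} [Field K] [AddCommGroup V] [Module K V]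
    [FiniteDimensional K V] {P N : Submodule K V} (Q : V → ℝ)
    (hdim : Module.finrank K V ≤ Module.finrank K P + Module.finrank K N)
    (hP : ∀ v ∈ P, v ≠ 0 → 0 < Q v) (hN : ∀ v ∈ N, v ≠ 0 → Q v < 0) : IsCompl P N := by
  refine (Submodule.isCompl_iff_disjoint P N hdim).mpr
    (Submodule.disjoint_def.mpr fun v hvP hvN => ?_)
  by_contra hv
  exact (hP v hvP hv).not_gt (hN v hvN hv)

section SumOfSquares

variable {ι : Type*} [Fintype ι] {c : ℂ}

noncomputable def sumMul (ι : Type*) [Fintype ι] : (ι → ℂ) →L[ℝ] (ι → ℂ) →L[ℝ] ℂ :=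
  ∑ i, (ContinuousLinearMap.mul ℝ ℂ).bilinearComp (.proj i) (.proj i)

@[simp] theorem sumMul_apply (v w : ι → ℂ) : sumMul ι v w = ∑ i, v i * w i := by
  simp [sumMul]

theorem hasFDerivAt_sum_sq (z : ι → ℂ) :
    HasFDerivAt (fun y : ι → ℂ => ∑ i, y i ^ 2) (((2 : ℝ) • sumMul ι) z) z := by
  have hfun : (fun y : ι → ℂ => ∑ i, y i ^ 2) = fun y => sumMul ι y (id y) := by
    ext y; simp [sq]
  have hder : ((2 : ℝ) • sumMul ι) z
      = (sumMul ι z).comp (.id ℝ _) + (sumMul ι).flip (id z) := by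
    ext v; simp [two_smul, mul_comm]
  rw [hfun, hder]
  exact (sumMul ι).hasFDerivAt.clm_apply (hasFDerivAt_id z)

theorem hasFDerivAt_const_add_sum_sq (c : ℂ) (z : ι → ℂ) :
    HasFDerivAt (fun y : ι → ℂ => c + ∑ i, y i ^ 2) (((2 : ℝ) • sumMul ι) z) z :=
  (hasFDerivAt_sum_sq z).const_add c

theorem fderiv_norm_const_add_sum_sq_zero (hc : c ≠ 0) :
    fderiv ℝ (fun z : ι → ℂ => ‖c + ∑ i, z i ^ 2‖) 0 = 0 := by
  rw [((hasFDerivAt_const_add_sum_sq c 0).norm (by simpa using hc)).fderiv]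
  simp

theorem fderiv_fderiv_norm_const_add_sum_sq_zero (hc : c ≠ 0) (v w : ι → ℂ) :
    fderiv ℝ (fun z : ι → ℂ => fderiv ℝ (fun y : ι → ℂ => ‖c + ∑ i, y i ^ 2‖) z) 0 v w
      = 2 * ‖c‖⁻¹ * ⟪c, ∑ i, v i * w i⟫ := by
  rw [fderiv_fderiv_norm_of_fderiv_eq_zero
    (.of_forall (hasFDerivAt_const_add_sum_sq c)) ((2 : ℝ) • sumMul ι).hasFDerivAt
    (map_zero _) (by simpa using hc)]
  simp only [Pi.zero_apply, ne_eq, two_ne_zero, not_false_eq_true, zero_pow, sum_const_zero,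
    add_zero, smul_apply, sumMul_apply, real_inner_smul_right]
  ring

theorem eq_zero_of_forall_inner_sum_mul_eq_zero (hc : c ≠ 0) {v : ι → ℂ}
    (h : ∀ w : ι → ℂ, ⟪c, ∑ i, v i * w i⟫ = 0) : v = 0 := by
  have hsum : ∑ i, v i * (c * starRingEnd ℂ (v i)) = (∑ i, ‖v i‖ ^ 2 : ℝ) • c := by
    rw [Complex.real_smul, Complex.ofReal_sum, Finset.sum_mul]
    refine Finset.sum_congr rfl fun i _ => ?_
    rw [mul_left_comm, Complex.mul_conj', Complex.ofReal_pow, mul_comm]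
  have h0 : (∑ i, ‖v i‖ ^ 2) * ‖c‖ ^ 2 = 0 := by
    rw [← h, hsum, real_inner_smul_right, real_inner_self_eq_norm_sq]
  have hsq : ∑ i, ‖v i‖ ^ 2 = 0 := by simpa [hc] using h0
  ext i
  simpa using (Finset.sum_eq_zero_iff_of_nonneg fun j _ => by positivity).mp hsq i (mem_univ i)

end SumOfSquares

section RealMultiples

variable {ι : Type*} {c : ℂ}

noncomputable def smulOfReal (ι : Type*) (a : ℂ) : (ι → ℝ) →ₗ[ℝ] ι → ℂ :=
  a • Complex.ofRealCLM.toLinearMap.compLeft ι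

@[simp] theorem smulOfReal_apply (a : ℂ) (u : ι → ℝ) (i : ι) :
    smulOfReal ι a u i = a * u i := by
  simp [smulOfReal]

theorem smulOfReal_injective {a : ℂ} (ha : a ≠ 0) : Function.Injective (smulOfReal ι a) := by
  intro u u' h
  ext i
  simpa [ha] using congrFun h i

variable [Fintype ι]

theorem finrank_range_smulOfReal {a : ℂ} (ha : a ≠ 0) :
    Module.finrank ℝ (LinearMap.range (smulOfReal ι a)) = Fintype.card ι := by
  rw [LinearMap.finrank_range_of_inj (smulOfReal_injective ha), Module.finrank_fintype_fun_eq_card]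

theorem inner_sum_mul_self_smulOfReal (a : ℂ) (u : ι → ℝ) :
    ⟪c, ∑ i, smulOfReal ι a u i * smulOfReal ι a u i⟫ = (∑ i, u i ^ 2) * ⟪c, a ^ 2⟫ := by
  have h : ∑ i, smulOfReal ι a u i * smulOfReal ι a u i = (∑ i, u i ^ 2 : ℝ) • a ^ 2 := by
    rw [Complex.real_smul, Complex.ofReal_sum, Finset.sum_mul]
    refine Finset.sum_congr rfl fun i _ => ?_
    simp only [smulOfReal_apply, Complex.ofReal_pow]
    ring
  rw [h, real_inner_smul_right]

theorem exists_pos_inner_sum_mul_self_eq {a : ℂ} {v : ι → ℂ}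
    (hv : v ∈ LinearMap.range (smulOfReal ι a)) (hv0 : v ≠ 0) :
    ∃ t : ℝ, 0 < t ∧ ⟪c, ∑ i, v i * v i⟫ = t * ⟪c, a ^ 2⟫ := by
  obtain ⟨u, rfl⟩ := hv
  have hu : u ≠ 0 := by rintro rfl; exact hv0 (map_zero _)
  obtain ⟨i, hi⟩ := Function.ne_iff.mp hu
  refine ⟨∑ i, u i ^ 2, ?_, inner_sum_mul_self_smulOfReal a u⟩
  exact Finset.sum_pos' (fun j _ => sq_nonneg _) ⟨i, mem_univ i, sq_pos_of_ne_zero hi⟩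

end RealMultiples

theorem stmt_2_general {n : ℕ} {c : ℂ} (hc : c ≠ 0) :
    fderiv ℝ (fun z : Fin n → ℂ => ‖c + ∑ i, z i ^ 2‖) 0 = 0 ∧
    (∀ v : Fin n → ℂ,
        (∀ w : Fin n → ℂ,
          fderiv ℝ (fun z : Fin n → ℂ =>
            fderiv ℝ (fun y : Fin n → ℂ => ‖c + ∑ i, y i ^ 2‖) z) 0 v w = 0) →
        v = 0) ∧
    ∃ P N : Submodule ℝ (Fin n → ℂ),
      Module.finrank ℝ P = n ∧ Module.finrank ℝ N = n ∧ IsCompl P N ∧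
      (∀ v ∈ P, v ≠ 0 →
        0 < fderiv ℝ (fun z : Fin n → ℂ =>
              fderiv ℝ (fun y : Fin n → ℂ => ‖c + ∑ i, y i ^ 2‖) z) 0 v v) ∧
      (∀ v ∈ N, v ≠ 0 →
        fderiv ℝ (fun z : Fin n → ℂ =>
          fderiv ℝ (fun y : Fin n → ℂ => ‖c + ∑ i, y i ^ 2‖) z) 0 v v < 0) := by
  simp only [fderiv_fderiv_norm_const_add_sum_sq_zero hc]
  obtain ⟨b, hb⟩ := IsAlgClosed.exists_pow_nat_eq c two_pos
  have hb0 : b ≠ 0 := by rintro rfl; exact hc (by simp [← hb])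
  have hbI0 : b * Complex.I ≠ 0 := mul_ne_zero hb0 Complex.I_ne_zero
  have hP : ∀ v ∈ LinearMap.range (smulOfReal (Fin n) b), v ≠ 0 →
      0 < 2 * ‖c‖⁻¹ * ⟪c, ∑ i, v i * v i⟫ := fun v hv hv0 => by
    obtain ⟨t, ht, heq⟩ := exists_pos_inner_sum_mul_self_eq (c := c) hv hv0
    rw [heq, hb, real_inner_self_eq_norm_sq]
    positivity
  have hN : ∀ v ∈ LinearMap.range (smulOfReal (Fin n) (b * Complex.I)), v ≠ 0 →
      2 * ‖c‖⁻¹ * ⟪c, ∑ i, v i * v i⟫ < 0 := fun v hv hv0 => by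
    obtain ⟨t, ht, heq⟩ := exists_pos_inner_sum_mul_self_eq (c := c) hv hv0
    rw [heq, mul_pow, Complex.I_sq, hb, mul_neg_one, inner_neg_right,
      real_inner_self_eq_norm_sq, mul_neg, mul_neg]
    exact neg_neg_of_pos (by positivity)
  have hdimP := (finrank_range_smulOfReal hb0).trans (Fintype.card_fin n)
  have hdimN := (finrank_range_smulOfReal hbI0).trans (Fintype.card_fin n)
  have hdim : Module.finrank ℝ (Fin n → ℂ) = n + n := by
    simp [Module.finrank_pi_fintype, Complex.finrank_real_complex, mul_two]
  refine ⟨fderiv_norm_const_add_sum_sq_zero hc,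
    fun v hv => eq_zero_of_forall_inner_sum_mul_eq_zero hc fun w => by simpa [hc] using hv w,
    _, _, hdimP, hdimN, ?_, hP, hN⟩
  exact Submodule.isCompl_of_pos_of_neg _ (by rw [hdim, hdimP, hdimN]) hP hN

/-- For `n ≥ 1` and `c ≠ 0`, the function `g z = |c + z₁² + ⋯ + zₙ²|`
on `ℂⁿ ≅ ℝ^{2n}` has a critical point at `0`, its second real derivative at `0`
is a nondegenerate bilinear form, and it splits into an `n`-dimensional positive
definite and an `n`-dimensional negative definite subspace; i.e. `0` is a
nondegenerate critical point of `g` of Morse index `n`. -/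
theorem stmt_2 {n : ℕ} (hn : 1 ≤ n) {c : ℂ} (hc : c ≠ 0) :
    fderiv ℝ (fun z : Fin n → ℂ => ‖c + ∑ i, z i ^ 2‖) 0 = 0 ∧
    (∀ v : Fin n → ℂ,
        (∀ w : Fin n → ℂ,
          fderiv ℝ (fun z : Fin n → ℂ =>
            fderiv ℝ (fun y : Fin n → ℂ => ‖c + ∑ i, y i ^ 2‖) z) 0 v w = 0) →
        v = 0) ∧
    ∃ P N : Submodule ℝ (Fin n → ℂ),
      Module.finrank ℝ P = n ∧ Module.finrank ℝ N = n ∧ IsCompl P N ∧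
      (∀ v ∈ P, v ≠ 0 →
        0 < fderiv ℝ (fun z : Fin n → ℂ =>
              fderiv ℝ (fun y : Fin n → ℂ => ‖c + ∑ i, y i ^ 2‖) z) 0 v v) ∧
      (∀ v ∈ N, v ≠ 0 →
        fderiv ℝ (fun z : Fin n → ℂ =>
          fderiv ℝ (fun y : Fin n → ℂ => ‖c + ∑ i, y i ^ 2‖) z) 0 v v < 0) :=
  stmt_2_general hc
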